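/- If a finite ranked poset P admits a nested chain decomposition (a partition into saturated chains such that for any two chains C, D, the rank intervals satisfy [C] ⊆ [D] or [D] ⊆ [C]), then the rank sequence of P is unimodal. -/

import Mathlib

/-- `C` is a saturated chain in the poset `P`: it is nonempty, totally ordered,
and consecutive elements of `C` are covering pairs of `P`. -/
def IsSaturatedChain {P : Type*} [PartialOrder P] (C : Finset P) : Prop :=
  C.Nonempty ∧ (∀ x ∈ C, ∀ y ∈ C, x ≤ y ∨ y ≤ x) ∧
    ∀ x ∈ C, ∀ y ∈ C, x < y → (∀ z ∈ C, ¬(x < z ∧ z < y)) → x ⋖ y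

/-- `x` and `y` are the bottom and top elements of the chain `C`. -/
def ChainEnds {P : Type*} [PartialOrder P] (C : Finset P) (x y : P) : Prop :=
  x ∈ C ∧ y ∈ C ∧ (∀ z ∈ C, x ≤ z) ∧ ∀ z ∈ C, z ≤ y

/-- `𝒞` is a chain decomposition of `P`: a partition of `P` into saturated chains. -/
def IsChainDecomp {P : Type*} [PartialOrder P] (𝒞 : Finset (Finset P)) : Prop :=
  (∀ C ∈ 𝒞, IsSaturatedChain C) ∧
  (∀ C ∈ 𝒞, ∀ D ∈ 𝒞, C ≠ D → Disjoint C D) ∧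
  ∀ x : P, ∃ C ∈ 𝒞, x ∈ C

/-- The sequence `a₀,…,a_n` is top interlacing:
`a₀ ≤ a_n ≤ a₁ ≤ a_{n-1} ≤ … ≤ a_{⌈n/2⌉}`. -/
def TopInterlacing (r : ℕ → ℕ) (n : ℕ) : Prop :=
  (∀ i, 2 * i < n → r i ≤ r (n - i)) ∧ ∀ i, 2 * i + 1 < n → r (n - i) ≤ r (i + 1)

/-- The sequence `a₀,…,a_n` is bottom interlacing:
`a_n ≤ a₀ ≤ a_{n-1} ≤ a₁ ≤ … ≤ a_{⌊n/2⌋}`. -/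
def BottomInterlacing (r : ℕ → ℕ) (n : ℕ) : Prop :=
  (∀ i, 2 * i < n → r (n - i) ≤ r i) ∧ ∀ i, 2 * i + 1 < n → r i ≤ r (n - 1 - i)

/-- A sequence of natural numbers (indexed by `ℕ`) is unimodal. -/
def SeqUnimodal (r : ℕ → ℕ) : Prop :=
  ∃ m : ℕ, ∀ i j : ℕ, i ≤ j → (j ≤ m → r i ≤ r j) ∧ (m ≤ i → r j ≤ r i)

/-!
A saturated chain meets every rank of its rank interval exactly once, so `r k` is the number of
chains of the decomposition whose rank interval contains `k`. Pairwise nested intervals share a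
point `m` (any point of an inclusion-minimal one), and among intervals containing `m` those
containing `k` can only grow as `k` increases to `m` and only shrink beyond it.
-/

open Finset

namespace IsSaturatedChain

variable {P : Type*} [PartialOrder P] {C : Finset P}

lemma exists_covBy_le (hC : IsSaturatedChain C) {z w : P} (hz : z ∈ C) (hw : w ∈ C)
    (hzw : z < w) : ∃ u ∈ C, z ⋖ u ∧ u ≤ w := by
  classical
  obtain ⟨u, hu, hmin⟩ := {v ∈ C | z < v ∧ v ≤ w}.exists_minimal ⟨w, by simp [hw, hzw]⟩
  rw [mem_filter] at hu
  refine ⟨u, hu.1, hC.2.2 z hz u hu.1 hu.2.1 fun v hv ⟨hzv, hvu⟩ => ?_, hu.2.2⟩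
  exact hvu.not_ge (hmin (mem_filter.2 ⟨hv, hzv, hvu.le.trans hu.2.2⟩) hvu.le)

lemma exists_chainEnds (hC : IsSaturatedChain C) : ∃ x y, ChainEnds C x y := by
  obtain ⟨x, hx, hxmin⟩ := C.exists_minimal hC.1
  obtain ⟨y, hy, hymax⟩ := C.exists_maximal hC.1
  exact ⟨x, y, hx, hy, fun z hz => (hC.2.1 x hx z hz).elim id (hxmin hz),
    fun z hz => (hC.2.1 z hz y hy).elim id (hymax hz)⟩

variable {ρ : P → ℕ}

lemma strictMonoOn_rank (hcov : ∀ x y : P, x ⋖ y → ρ y = ρ x + 1) (hC : IsSaturatedChain C) :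
    StrictMonoOn ρ C := fun z hz =>
  (C.finite_toSet.wellFoundedOn (r := (· > ·))).induction hz
    (P := fun z => ∀ ⦃w⦄, w ∈ (C : Set P) → z < w → ρ z < ρ w) fun z hz ih w hw hzw => by
      obtain ⟨u, hu, hzu, huw⟩ := hC.exists_covBy_le hz hw hzw
      have hρu := hcov z u hzu
      rcases huw.eq_or_lt with rfl | huw
      · omega
      · have := ih u hu hzu.lt hw huw
        omega

lemma injOn_rank (hcov : ∀ x y : P, x ⋖ y → ρ y = ρ x + 1) (hC : IsSaturatedChain C) :
    Set.InjOn ρ C := by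
  intro z hz w hw h
  rcases hC.2.1 z hz w hw with hzw | hwz
  · exact hzw.eq_or_lt.resolve_right fun hlt => (hC.strictMonoOn_rank hcov hz hw hlt).ne h
  · exact (hwz.eq_or_lt.resolve_right fun hlt =>
      (hC.strictMonoOn_rank hcov hw hz hlt).ne h.symm).symm

lemma image_rank_eq_Icc (hcov : ∀ x y : P, x ⋖ y → ρ y = ρ x + 1) (hC : IsSaturatedChain C)
    {x y : P} (hxy : ChainEnds C x y) : ρ '' C = Set.Icc (ρ x) (ρ y) := by
  have hmono := (hC.strictMonoOn_rank hcov).monotoneOn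
  refine Set.Subset.antisymm ?_ ?_
  · rintro _ ⟨z, hz, rfl⟩
    exact ⟨hmono hxy.1 hz (hxy.2.2.1 z hz), hmono hz hxy.2.1 (hxy.2.2.2 z hz)⟩
  · rintro k ⟨hxk, hky⟩
    induction k, hxk using Nat.le_induction with
    | base => exact ⟨x, hxy.1, rfl⟩
    | succ k hxk ih =>
      obtain ⟨z, hz, rfl⟩ := ih (by omega)
      have hzy : z < y := (hxy.2.2.2 z hz).lt_of_ne (by rintro rfl; omega)
      obtain ⟨u, hu, hzu, -⟩ := hC.exists_covBy_le hz hxy.2.1 hzy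
      exact ⟨u, hu, hcov z u hzu⟩

end IsSaturatedChain

lemma Set.InjOn.card_filter_apply_eq {α β : Type*} [DecidableEq β] {f : α → β} {s : Finset α}
    (hf : Set.InjOn f s) (b : β) : #{x ∈ s | f x = b} = if b ∈ s.image f then 1 else 0 := by
  split_ifs with hb
  · obtain ⟨x, hx, rfl⟩ := Finset.mem_image.1 hb
    refine card_eq_one.2 ⟨x, Finset.ext fun y => ?_⟩
    rw [Finset.mem_filter, Finset.mem_singleton]
    exact ⟨fun ⟨hy, hfy⟩ => hf hy hx hfy, by rintro rfl; exact ⟨hx, rfl⟩⟩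
  · exact card_eq_zero.2 <| filter_eq_empty_iff.2 fun x hx hfx =>
      hb (Finset.mem_image.2 ⟨x, hx, hfx⟩)

lemma Nat.card_fiber_eq_card_filter_mem_image {α β : Type*} [DecidableEq β]
    (𝒞 : Finset (Finset α)) (hdisj : ∀ C ∈ 𝒞, ∀ D ∈ 𝒞, C ≠ D → Disjoint C D)
    (hcover : ∀ x, ∃ C ∈ 𝒞, x ∈ C) {f : α → β} (hf : ∀ C ∈ 𝒞, Set.InjOn f C) (b : β) :
    Nat.card {x // f x = b} = #{C ∈ 𝒞 | b ∈ C.image f} := by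
  classical
  have hfiber : {x | f x = b} = ↑(𝒞.biUnion fun C => {x ∈ C | f x = b}) := by
    ext x
    simp only [Set.mem_ofPred_eq, coe_biUnion, coe_filter, Set.mem_iUnion, exists_prop]
    refine ⟨fun hx => ?_, fun ⟨_, _, _, hx⟩ => hx⟩
    obtain ⟨C, hC, hxC⟩ := hcover x
    exact ⟨C, hC, hxC, hx⟩
  change Nat.card ({x | f x = b} : Set α) = _
  rw [hfiber, Nat.card_coe_set_eq, Set.ncard_coe_finset, card_biUnion fun C hC D hD hCD =>
    disjoint_filter_filter (hdisj C hC D hD hCD), card_filter]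
  exact sum_congr rfl fun C hC => (hf C hC).card_filter_apply_eq b

lemma Finset.exists_forall_mem_of_nested {ι α : Type*} [Nonempty α] (s : Finset ι)
    (I : ι → Set α) (hne : ∀ i ∈ s, (I i).Nonempty)
    (hnest : ∀ i ∈ s, ∀ j ∈ s, I i ⊆ I j ∨ I j ⊆ I i) : ∃ a, ∀ i ∈ s, a ∈ I i := by
  rcases s.eq_empty_or_nonempty with rfl | hs
  · exact ⟨Classical.arbitrary α, by simp⟩
  obtain ⟨i, hi, hmin⟩ := s.exists_minimalFor I hs
  obtain ⟨a, ha⟩ := hne i hi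
  exact ⟨a, fun j hj => (hnest i hi j hj).elim (· ha) fun hji => hmin hj hji ha⟩

lemma seqUnimodal_card_filter_mem {ι : Type*} (s : Finset ι) (I : ι → Finset ℕ)
    (hI : ∀ i ∈ s, (I i : Set ℕ).OrdConnected) {m : ℕ} (hm : ∀ i ∈ s, m ∈ I i) :
    SeqUnimodal fun k => #{i ∈ s | k ∈ I i} := by
  refine ⟨m, fun k l hkl => ⟨fun hlm => card_le_card fun i hi => ?_,
    fun hmk => card_le_card fun i hi => ?_⟩⟩
  all_goals rw [mem_filter] at hi ⊢; refine ⟨hi.1, ?_⟩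
  · exact (hI i hi.1).out hi.2 (hm i hi.1) ⟨hkl, hlm⟩
  · exact (hI i hi.1).out (hm i hi.1) hi.2 ⟨hmk, hkl⟩

theorem rank_unimodal_of_NCD_general {P : Type*} [PartialOrder P]
    (ρ : P → ℕ) (hcov : ∀ x y : P, x ⋖ y → ρ y = ρ x + 1)
    (𝒞 : Finset (Finset P)) (hCD : IsChainDecomp 𝒞)
    (hnest : ∀ C ∈ 𝒞, ∀ D ∈ 𝒞, ∀ x y x' y' : P,
      ChainEnds C x y → ChainEnds D x' y' →
        Set.Icc (ρ x) (ρ y) ⊆ Set.Icc (ρ x') (ρ y') ∨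
        Set.Icc (ρ x') (ρ y') ⊆ Set.Icc (ρ x) (ρ y)) :
    SeqUnimodal (fun k => Nat.card {z : P // ρ z = k}) := by
  obtain ⟨hsat, hdisj, hcover⟩ := hCD
  have hinterval : ∀ C ∈ 𝒞, ∃ x y, ChainEnds C x y ∧
      ((C.image ρ : Finset ℕ) : Set ℕ) = Set.Icc (ρ x) (ρ y) := fun C hC => by
    obtain ⟨x, y, hxy⟩ := (hsat C hC).exists_chainEnds
    exact ⟨x, y, hxy, by rw [coe_image, (hsat C hC).image_rank_eq_Icc hcov hxy]⟩
  obtain ⟨m, hm⟩ := 𝒞.exists_forall_mem_of_nested (fun C => (C.image ρ : Set ℕ))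
    (fun C hC => coe_nonempty.2 ((hsat C hC).1.image ρ)) fun C hC D hD => by
      obtain ⟨x, y, hxy, hCI⟩ := hinterval C hC
      obtain ⟨x', y', hxy', hDI⟩ := hinterval D hD
      simpa only [hCI, hDI] using hnest C hC D hD x y x' y' hxy hxy'
  simp only [Nat.card_fiber_eq_card_filter_mem_image 𝒞 hdisj hcover
    fun C hC => (hsat C hC).injOn_rank hcov]
  refine seqUnimodal_card_filter_mem 𝒞 _ (fun C hC => ?_) hm
  obtain ⟨x, y, -, hCI⟩ := hinterval C hC
  exact hCI ▸ Set.ordConnected_Icc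

/-- If a finite ranked poset `P` (with rank function `ρ`, rank `n`) admits a
nested chain decomposition (the rank intervals of any two chains are
comparable under inclusion), then its rank sequence is unimodal. -/
theorem rank_unimodal_of_NCD {P : Type*} [Finite P] [PartialOrder P]
    (ρ : P → ℕ) (hcov : ∀ x y : P, x ⋖ y → ρ y = ρ x + 1)
    (hmin : ∀ x : P, IsMin x → ρ x = 0)
    (n : ℕ) (hle : ∀ x, ρ x ≤ n) (hex : ∃ x, ρ x = n)
    (𝒞 : Finset (Finset P)) (hCD : IsChainDecomp 𝒞)
    (hnest : ∀ C ∈ 𝒞, ∀ D ∈ 𝒞, ∀ x y x' y' : P,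
      ChainEnds C x y → ChainEnds D x' y' →
        Set.Icc (ρ x) (ρ y) ⊆ Set.Icc (ρ x') (ρ y') ∨
        Set.Icc (ρ x') (ρ y') ⊆ Set.Icc (ρ x) (ρ y)) :
    SeqUnimodal (fun k => Nat.card {z : P // ρ z = k}) :=
  rank_unimodal_of_NCD_general ρ hcov 𝒞 hCD hnest
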